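/- Let (V, Δ, c) be a vertex coalgebra (coefficient form), set D* := (Id ⊗ c) ∘ Δ_{−2}, and for i ≥ 0 write D*^{(i)} := (D*)^i / i!. Then for every i ≥ 0, (Id ⊗ c) ∘ Δ_{−1−i} = D*^{(i)} as maps V → V. -/
import Mathlib


open TensorProduct

noncomputable section

/-- Generalized binomial coefficient `C(p,i) = p(p-1)⋯(p-i+1)/i!` as a complex number. -/
def cbin (p : ℤ) (i : ℕ) : ℂ :=
  (∏ k ∈ Finset.range i, ((p : ℂ) - (k : ℂ))) / (i.factorial : ℂ)

variable {V : Type*} [AddCommGroup V] [Module ℂ V]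

/-- The flip `T` on `V ⊗ V`, `T (u ⊗ w) = w ⊗ u`. -/
def Tflip : V ⊗[ℂ] V →ₗ[ℂ] V ⊗[ℂ] V := (TensorProduct.comm ℂ V V).toLinearMap

/-- `T ⊗ Id` acting on `V ⊗ (V ⊗ V)` (conjugated by the associator). -/
def TId : (V ⊗[ℂ] (V ⊗[ℂ] V)) →ₗ[ℂ] (V ⊗[ℂ] (V ⊗[ℂ] V)) :=
  (TensorProduct.assoc ℂ V V V).toLinearMap ∘ₗ
    (TensorProduct.map Tflip LinearMap.id) ∘ₗ (TensorProduct.assoc ℂ V V V).symm.toLinearMap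

/-- `(Δₙ ⊗ Id) ∘ Δₘ` as a map `V → V ⊗ (V ⊗ V)` (via the associator). -/
def DL (Δ : ℤ → V →ₗ[ℂ] V ⊗[ℂ] V) (n m : ℤ) : V →ₗ[ℂ] (V ⊗[ℂ] (V ⊗[ℂ] V)) :=
  (TensorProduct.assoc ℂ V V V).toLinearMap ∘ₗ (TensorProduct.map (Δ n) LinearMap.id) ∘ₗ Δ m

/-- `(Id ⊗ Δₙ) ∘ Δₘ` as a map `V → V ⊗ (V ⊗ V)`. -/
def DR (Δ : ℤ → V →ₗ[ℂ] V ⊗[ℂ] V) (n m : ℤ) : V →ₗ[ℂ] (V ⊗[ℂ] (V ⊗[ℂ] V)) :=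
  (TensorProduct.map LinearMap.id (Δ n)) ∘ₗ Δ m

/-- Truncation: for each `v` there is `N` with `Δₙ v = 0` for all `n ≤ N`. -/
def Truncation (Δ : ℤ → V →ₗ[ℂ] V ⊗[ℂ] V) : Prop :=
  ∀ v : V, ∃ N : ℤ, ∀ n ≤ N, Δ n v = 0

/-- `(Id ⊗ c)` composed with the canonical identification `V ⊗ ℂ ≅ V`. -/
def IdC (c : V →ₗ[ℂ] ℂ) : (V ⊗[ℂ] V) →ₗ[ℂ] V :=
  (TensorProduct.rid ℂ V).toLinearMap ∘ₗ TensorProduct.map LinearMap.id c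

/-- `(c ⊗ Id)` composed with the canonical identification `ℂ ⊗ V ≅ V`. -/
def CId (c : V →ₗ[ℂ] ℂ) : (V ⊗[ℂ] V) →ₗ[ℂ] V :=
  (TensorProduct.lid ℂ V).toLinearMap ∘ₗ TensorProduct.map c LinearMap.id

/-- Divided power `D*^{(i)} = (D*)^i / i!`. -/
def dpow (D : V →ₗ[ℂ] V) (i : ℕ) : V →ₗ[ℂ] V := ((i.factorial : ℂ)⁻¹) • (D ^ i)

/-- The Co-Borcherds identity at `(p,q,r)`. -/
def CoBorcherds (Δ : ℤ → V →ₗ[ℂ] V ⊗[ℂ] V) (p q r : ℤ) : Prop :=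
  ∀ v : V,
    (∑ᶠ i : ℕ, cbin p i • DL Δ (r + i) (p + q - i) v) =
      ∑ᶠ i : ℕ, ((-1 : ℂ) ^ i * cbin r i) •
        (DR Δ (q + i) (p + r - i) v - (-1 : ℂ) ^ r • TId (DR Δ (p + i) (q + r - i) v))

/-- Left counit: `(c ⊗ Id) ∘ Δₙ` is the identity for `n = -1` and zero otherwise. -/
def LeftCounit (Δ : ℤ → V →ₗ[ℂ] V ⊗[ℂ] V) (c : V →ₗ[ℂ] ℂ) : Prop :=
  CId c ∘ₗ Δ (-1) = LinearMap.id ∧ ∀ n : ℤ, n ≠ -1 → CId c ∘ₗ Δ n = 0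

/-- Cocreation: `(Id ⊗ c) ∘ Δₙ = 0` for `n ≥ 0` and `(Id ⊗ c) ∘ Δ₋₁ = Id`. -/
def Cocreation (Δ : ℤ → V →ₗ[ℂ] V ⊗[ℂ] V) (c : V →ₗ[ℂ] ℂ) : Prop :=
  (∀ n : ℤ, 0 ≤ n → IdC c ∘ₗ Δ n = 0) ∧ IdC c ∘ₗ Δ (-1) = LinearMap.id

/-- Exponential cocreation: `(Id ⊗ c) ∘ Δ₋₁₋ᵢ = D*^{(i)}` for all `i ≥ 0`,
and `(Id ⊗ c) ∘ Δₙ = 0` for all `n ≥ 0`. -/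
def ExpCocreation (Δ : ℤ → V →ₗ[ℂ] V ⊗[ℂ] V) (c : V →ₗ[ℂ] ℂ) (D : V →ₗ[ℂ] V) : Prop :=
  (∀ i : ℕ, IdC c ∘ₗ Δ (-1 - i) = dpow D i) ∧ ∀ n : ℤ, 0 ≤ n → IdC c ∘ₗ Δ n = 0

/-- The `D*` formula: `(D* ⊗ Id) ∘ Δ_q = -q • Δ_{q-1}`. -/
def DstFormula (Δ : ℤ → V →ₗ[ℂ] V ⊗[ℂ] V) (D : V →ₗ[ℂ] V) : Prop :=
  ∀ q : ℤ, TensorProduct.map D LinearMap.id ∘ₗ Δ q = (-(q : ℂ)) • Δ (q - 1)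

/-- Coefficient Co-Skew symmetry. -/
def CoSkew (Δ : ℤ → V →ₗ[ℂ] V ⊗[ℂ] V) (D : V →ₗ[ℂ] V) : Prop :=
  ∀ (r : ℤ) (v : V),
    {i : ℕ | Δ (r + i) (dpow D i v) ≠ 0}.Finite ∧
    Tflip (Δ r v) = ∑ᶠ i : ℕ, (-1 : ℂ) ^ (r + 1 + (i : ℤ)) • Δ (r + i) (dpow D i v)

/-- Coefficient Co-Commutator formula at `(p,q)`. -/
def CoCommutator (Δ : ℤ → V →ₗ[ℂ] V ⊗[ℂ] V) (p q : ℤ) : Prop :=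
  ∀ v : V,
    (∑ᶠ i : ℕ, cbin p i • DL Δ (i : ℤ) (p + q - i) v) = DR Δ q p v - TId (DR Δ p q v)

/-- Coefficient Co-Associator formula at `(q,r)`. -/
def CoAssociator (Δ : ℤ → V →ₗ[ℂ] V ⊗[ℂ] V) (q r : ℤ) : Prop :=
  ∀ v : V,
    DL Δ r q v =
      ∑ᶠ i : ℕ, ((-1 : ℂ) ^ i * cbin r i) •
        (DR Δ (q + i) (r - i) v - (-1 : ℂ) ^ r • TId (DR Δ (i : ℤ) (q + r - i) v))

/-- `Id ⊗ c ⊗ c` read as a map `V ⊗ (V ⊗ V) → V`. -/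
def Ffun (c : V →ₗ[ℂ] ℂ) : (V ⊗[ℂ] (V ⊗[ℂ] V)) →ₗ[ℂ] V :=
  IdC c ∘ₗ TensorProduct.map LinearMap.id (IdC c)

lemma IdC_tmul (c : V →ₗ[ℂ] ℂ) (x y : V) : IdC c (x ⊗ₜ y) = c y • x := by simp [IdC]
lemma CId_tmul (c : V →ₗ[ℂ] ℂ) (x y : V) : CId c (x ⊗ₜ y) = c x • y := by simp [CId]

lemma Ffun_tmul (c : V →ₗ[ℂ] ℂ) (a x y : V) :
    Ffun c (a ⊗ₜ (x ⊗ₜ y)) = (c x * c y) • a := by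
  simp [Ffun, IdC_tmul, smul_smul, mul_comm]

lemma Ffun_assoc (c : V →ₗ[ℂ] ℂ) (b : V) (t : V ⊗[ℂ] V) :
    Ffun c ((TensorProduct.assoc ℂ V V V) (t ⊗ₜ b)) = c b • IdC c t := by
  induction t using TensorProduct.induction_on with
  | zero => simp
  | tmul x y => simp [Ffun_tmul, IdC_tmul, smul_smul, mul_comm]
  | add s t hs ht => simp only [add_tmul, map_add, hs, ht, smul_add]

lemma F_DL (c : V →ₗ[ℂ] ℂ) (Δ : ℤ → V →ₗ[ℂ] V ⊗[ℂ] V) (n m : ℤ) (v : V) :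
    Ffun c (DL Δ n m v) = (IdC c ∘ₗ Δ n) ((IdC c ∘ₗ Δ m) v) := by
  simp only [DL, LinearMap.comp_apply, LinearEquiv.coe_coe]
  generalize Δ m v = w
  induction w using TensorProduct.induction_on with
  | zero => simp
  | tmul a b => simp [Ffun_assoc, IdC_tmul, map_smul]
  | add s t hs ht => simp only [map_add, hs, ht]

lemma F_DR (c : V →ₗ[ℂ] ℂ) (Δ : ℤ → V →ₗ[ℂ] V ⊗[ℂ] V) (n m : ℤ) (v : V) :
    Ffun c (DR Δ n m v) =
      IdC c (TensorProduct.map LinearMap.id (IdC c ∘ₗ Δ n) (Δ m v)) := by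
  simp only [DR, LinearMap.comp_apply, Ffun]
  generalize Δ m v = w
  induction w using TensorProduct.induction_on with
  | zero => simp
  | tmul a b => simp
  | add s t hs ht => simp only [map_add, hs, ht]

lemma Ffun_TId (c : V →ₗ[ℂ] ℂ) (a : V) (t : V ⊗[ℂ] V) :
    Ffun c (TId (a ⊗ₜ t)) = c a • IdC c t := by
  induction t using TensorProduct.induction_on with
  | zero => simp
  | tmul x y => simp [TId, Tflip, Ffun_tmul, IdC_tmul, smul_smul, mul_comm]
  | add s t hs ht => simp only [tmul_add, map_add, hs, ht, smul_add]

lemma F_TId_DR (c : V →ₗ[ℂ] ℂ) (Δ : ℤ → V →ₗ[ℂ] V ⊗[ℂ] V) (n m : ℤ) (v : V) :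
    Ffun c (TId (DR Δ n m v)) = (IdC c ∘ₗ Δ n) ((CId c ∘ₗ Δ m) v) := by
  simp only [DR, LinearMap.comp_apply]
  generalize Δ m v = w
  induction w using TensorProduct.induction_on with
  | zero => simp
  | tmul a b => simp [Ffun_TId, CId_tmul, map_smul]
  | add s t hs ht => simp only [map_add, hs, ht]

lemma map_id_zero : TensorProduct.map (LinearMap.id : V →ₗ[ℂ] V) (0 : V →ₗ[ℂ] V) = 0 := by
  apply TensorProduct.ext'; intro x y; simp

lemma cbin_zero (p : ℤ) : cbin p 0 = 1 := by simp [cbin]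
lemma cbin_one (p : ℤ) : cbin p 1 = p := by simp [cbin]

lemma key_rec (Δ : ℤ → V →ₗ[ℂ] V ⊗[ℂ] V) (c : V →ₗ[ℂ] ℂ)
    (hcu : LeftCounit Δ c) (hcc : Cocreation Δ c) (htr : Truncation Δ)
    (hB : ∀ p q r : ℤ, CoBorcherds Δ p q r) (p : ℤ) (v : V) :
    (IdC c ∘ₗ Δ (-2)) ((IdC c ∘ₗ Δ (p - 1)) v) + (p : ℂ) • (IdC c ∘ₗ Δ (p - 2)) v
      = (IdC c ∘ₗ Δ (p - 2)) v := by
  obtain ⟨N, hN⟩ := htr v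
  set M : ℕ := (p - 1 - N).toNat + (0 - N).toNat + 2 with hM
  have h := hB p (-1) (-2) v
  have hL : (Function.support fun i : ℕ =>
      cbin p i • DL Δ (-2 + (i : ℤ)) (p + -1 - (i : ℤ)) v) ⊆ ↑(Finset.range M) := by
    intro i hi
    simp only [Finset.coe_range, Set.mem_Iio]
    by_contra hiM
    have hz : Δ (p + -1 - (i : ℤ)) v = 0 := hN _ (by omega)
    apply hi
    simp [DL, hz]
  have hR : (Function.support fun i : ℕ =>
      ((-1 : ℂ) ^ i * cbin (-2) i) •
        (DR Δ (-1 + (i : ℤ)) (p + -2 - (i : ℤ)) v -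
          (-1 : ℂ) ^ (-2 : ℤ) • TId (DR Δ (p + (i : ℤ)) (-1 + -2 - (i : ℤ)) v)))
      ⊆ ↑(Finset.range M) := by
    intro i hi
    simp only [Finset.coe_range, Set.mem_Iio]
    by_contra hiM
    have hz1 : Δ (p + -2 - (i : ℤ)) v = 0 := hN _ (by omega)
    have hz2 : Δ (-1 + -2 - (i : ℤ)) v = 0 := hN _ (by omega)
    have hz3 : Δ (-3 - (i : ℤ)) v = 0 := hN _ (by omega)
    apply hi
    simp [DR, hz1, hz2, hz3]
  rw [finsum_eq_finset_sum_of_support_subset _ hL,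
      finsum_eq_finset_sum_of_support_subset _ hR] at h
  have h2 := congrArg (Ffun c) h
  rw [map_sum, map_sum] at h2
  simp only [map_smul, map_sub] at h2
  -- compute left side
  have hLsum : ∑ i ∈ Finset.range M,
      cbin p i • Ffun c (DL Δ (-2 + (i : ℤ)) (p + -1 - (i : ℤ)) v)
      = (IdC c ∘ₗ Δ (-2)) ((IdC c ∘ₗ Δ (p - 1)) v) + (p : ℂ) • (IdC c ∘ₗ Δ (p - 2)) v := by
    rw [← Finset.sum_subset (Finset.range_subset_range.2 (by omega : 2 ≤ M))]
    · rw [Finset.sum_range_succ, Finset.sum_range_one]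
      have e0 : ((-2 : ℤ) + ((0 : ℕ) : ℤ)) = -2 := by norm_num
      have e0' : (p + -1 - ((0 : ℕ) : ℤ)) = p - 1 := by omega
      have e1 : ((-2 : ℤ) + ((1 : ℕ) : ℤ)) = -1 := by norm_num
      have e1' : (p + -1 - ((1 : ℕ) : ℤ)) = p - 2 := by omega
      rw [F_DL, F_DL, e0, e0', e1, e1', hcc.2, cbin_zero, cbin_one, one_smul]
      simp
    · intro i _ hi2
      have h0 : (0 : ℤ) ≤ -2 + (i : ℤ) := by
        simp only [Finset.mem_range] at hi2; omega
      rw [F_DL, hcc.1 _ h0]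
      simp
  -- compute right side
  have hRsum : ∑ i ∈ Finset.range M,
      ((-1 : ℂ) ^ i * cbin (-2) i) •
        (Ffun c (DR Δ (-1 + (i : ℤ)) (p + -2 - (i : ℤ)) v) -
          (-1 : ℂ) ^ (-2 : ℤ) • Ffun c (TId (DR Δ (p + (i : ℤ)) (-1 + -2 - (i : ℤ)) v)))
      = (IdC c ∘ₗ Δ (p - 2)) v := by
    have hTzero : ∀ i : ℕ,
        Ffun c (TId (DR Δ (p + (i : ℤ)) (-1 + -2 - (i : ℤ)) v)) = 0 := by
      intro i
      rw [F_TId_DR, hcu.2 _ (by omega : (-1 : ℤ) + -2 - (i : ℤ) ≠ -1)]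
      simp
    rw [← Finset.sum_subset (Finset.range_subset_range.2 (by omega : 1 ≤ M))]
    · rw [Finset.sum_range_one]
      have e0 : ((-1 : ℤ) + ((0 : ℕ) : ℤ)) = -1 := by norm_num
      have e0' : (p + -2 - ((0 : ℕ) : ℤ)) = p - 2 := by omega
      rw [hTzero, F_DR, e0, e0', hcc.2, cbin_zero, TensorProduct.map_id]
      simp [IdC]
    · intro i _ hi1
      have h0 : (0 : ℤ) ≤ -1 + (i : ℤ) := by
        simp only [Finset.mem_range] at hi1; omega
      rw [hTzero, F_DR, hcc.1 _ h0, map_id_zero]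
      simp
  rw [hLsum, hRsum] at h2
  exact h2

theorem expCocreation_of_vertexCoalgebra (Δ : ℤ → V →ₗ[ℂ] V ⊗[ℂ] V) (c : V →ₗ[ℂ] ℂ)
    (hcu : LeftCounit Δ c) (hcc : Cocreation Δ c) (htr : Truncation Δ)
    (hB : ∀ p q r : ℤ, CoBorcherds Δ p q r) :
    ∀ i : ℕ, IdC c ∘ₗ Δ (-1 - i) = dpow (IdC c ∘ₗ Δ (-2)) i := by
  intro i
  induction i with
  | zero =>
    have : (-1 - ((0 : ℕ) : ℤ)) = -1 := by norm_num
    rw [this, hcc.2, dpow]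
    simp [Module.End.one_eq_id]
  | succ i ih =>
    have hkey := key_rec Δ c hcu hcc htr hB (-(i : ℤ)) 
    have hco : ((-(i : ℤ)) - 1) = -1 - (i : ℤ) := by ring
    have hco2 : ((-(i : ℤ)) - 2) = -1 - ((i + 1 : ℕ) : ℤ) := by push_cast; ring
    apply LinearMap.ext
    intro v
    have h := hkey v
    rw [hco, hco2] at h
    -- h : D (E(-1-i) v) + (-i) • E(-1-(i+1)) v = E(-1-(i+1)) v
    have hcast : (((-(i : ℤ)) : ℤ) : ℂ) = -(i : ℂ) := by push_cast; ring
    rw [hcast] at h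
    rw [← eq_sub_iff_add_eq] at h
    have h' : (IdC c ∘ₗ Δ (-2)) ((IdC c ∘ₗ Δ (-1 - (i : ℤ))) v)
        = (1 + (i : ℂ)) • (IdC c ∘ₗ Δ (-1 - ((i + 1 : ℕ) : ℤ))) v :=
      h.trans (by module)
    have hne : (1 + (i : ℂ)) ≠ 0 := by
      intro hc
      have h0 : (1 + i : ℕ) = 0 := by exact_mod_cast hc
      omega
    have : (IdC c ∘ₗ Δ (-1 - ((i + 1 : ℕ) : ℤ))) v
        = (1 + (i : ℂ))⁻¹ • (IdC c ∘ₗ Δ (-2)) ((IdC c ∘ₗ Δ (-1 - (i : ℤ))) v) := by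
      rw [h', inv_smul_smul₀ hne]
    rw [this, ih]
    simp only [dpow, LinearMap.smul_apply, map_smul, Module.End.pow_apply,
      Function.iterate_succ_apply']
    rw [smul_smul]
    congr 1
    rw [Nat.factorial_succ]
    push_cast
    rw [mul_inv]
    ring

end
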